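/- For every real-valued function f differentiable on an interval [a,b] with 0 < a < b (so [a,b] does not contain 0), and for all pairs x₁ ≠ x₂ in [a,b], there exists a point ξ strictly between x₁ and x₂ such that (x₁ f(x₂) - x₂ f(x₁))/(x₁ - x₂) = f(ξ) - ξ f'(ξ). -/

import Mathlib

/-! Cauchy's mean value theorem applied to `f x / x` and `1 / x`, which are differentiable on
any interval avoiding `0`: the ratio of their increments is the Pompeiu slope
`(x₁ f(x₂) - x₂ f(x₁)) / (x₁ - x₂)`, and the ratio of their derivatives is `f ξ - ξ f'(ξ)`. -/

open Set

theorem exists_hasDerivAt_eq_pompeiu_slope {f f' : ℝ → ℝ} {a b : ℝ} (hab : a < b)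
    (h0 : (0 : ℝ) ∉ Icc a b) (hfc : ContinuousOn f (Icc a b))
    (hff' : ∀ x ∈ Ioo a b, HasDerivAt f (f' x) x) :
    ∃ c ∈ Ioo a b, (a * f b - b * f a) / (a - b) = f c - c * f' c := by
  have hne : ∀ x ∈ Icc a b, x ≠ 0 := fun x hx hx0 => h0 (hx0 ▸ hx)
  obtain ⟨c, hc, hcauchy⟩ := exists_ratio_hasDerivAt_eq_ratio_slope
    (fun x => f x / x) (fun x => (f' x * x - f x * 1) / x ^ 2) hab
    (hfc.div continuousOn_id hne)
    (fun x hx => (hff' x hx).div (hasDerivAt_id x) (hne x (Ioo_subset_Icc_self hx)))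
    (fun x => x⁻¹) (fun x => -(x ^ 2)⁻¹) (continuousOn_inv₀.mono hne)
    (fun x hx => hasDerivAt_inv (hne x (Ioo_subset_Icc_self hx)))
  refine ⟨c, hc, ?_⟩
  have ha := hne a (left_mem_Icc.2 hab.le)
  have hb := hne b (right_mem_Icc.2 hab.le)
  have hc0 := hne c (Ioo_subset_Icc_self hc)
  field_simp at hcauchy
  rw [div_eq_iff (sub_ne_zero.2 hab.ne)]
  linear_combination hcauchy

theorem exists_deriv_eq_pompeiu_slope {f : ℝ → ℝ} {x y : ℝ} (hxy : x ≠ y)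
    (h0 : (0 : ℝ) ∉ uIcc x y) (hfc : ContinuousOn f (uIcc x y))
    (hfd : ∀ z ∈ Ioo (min x y) (max x y), DifferentiableAt ℝ f z) :
    ∃ ξ ∈ Ioo (min x y) (max x y), (x * f y - y * f x) / (x - y) = f ξ - ξ * deriv f ξ := by
  wlog hlt : x < y generalizing x y
  · obtain ⟨ξ, hξ, heq⟩ := this hxy.symm (uIcc_comm x y ▸ h0) (uIcc_comm x y ▸ hfc)
      (by rwa [min_comm, max_comm]) (lt_of_le_of_ne (not_lt.1 hlt) hxy.symm)
    refine ⟨ξ, by rwa [min_comm, max_comm], ?_⟩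
    rw [← heq, div_eq_div_iff (sub_ne_zero.2 hxy) (sub_ne_zero.2 hxy.symm)]
    ring
  rw [uIcc_of_lt hlt] at h0 hfc
  rw [min_eq_left hlt.le, max_eq_right hlt.le] at hfd ⊢
  exact exists_hasDerivAt_eq_pompeiu_slope hlt h0 hfc fun z hz => (hfd z hz).hasDerivAt

theorem pompeiu_mvt_general (f : ℝ → ℝ) (a b : ℝ) (ha : 0 < a)
    (hfc : ContinuousOn f (Set.Icc a b))
    (hfd : ∀ x ∈ Set.Ioo a b, DifferentiableAt ℝ f x)
    (x₁ x₂ : ℝ) (hx₁ : x₁ ∈ Set.Icc a b) (hx₂ : x₂ ∈ Set.Icc a b) (hne : x₁ ≠ x₂) :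
    ∃ ξ ∈ Set.Ioo (min x₁ x₂) (max x₁ x₂),
      (x₁ * f x₂ - x₂ * f x₁) / (x₁ - x₂) = f ξ - ξ * deriv f ξ := by
  have hsub : uIcc x₁ x₂ ⊆ Icc a b := uIcc_subset_Icc hx₁ hx₂
  have hsubo : Ioo (min x₁ x₂) (max x₁ x₂) ⊆ Ioo a b :=
    Ioo_subset_Ioo (le_min hx₁.1 hx₂.1) (max_le hx₁.2 hx₂.2)
  exact exists_deriv_eq_pompeiu_slope hne (fun h0 => (hsub h0).1.not_gt ha) (hfc.mono hsub)
    fun z hz => hfd z (hsubo hz)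

/-- Pompeiu's mean value theorem: for `f` continuous on `[a,b]` and differentiable on
`(a,b)` with `0 < a < b`, and `x₁ ≠ x₂` in `[a,b]`, there is `ξ` strictly between `x₁`
and `x₂` with `(x₁ f(x₂) - x₂ f(x₁))/(x₁ - x₂) = f(ξ) - ξ f'(ξ)`. -/
theorem pompeiu_mvt (f : ℝ → ℝ) (a b : ℝ) (ha : 0 < a) (hab : a < b)
    (hfc : ContinuousOn f (Set.Icc a b))
    (hfd : ∀ x ∈ Set.Ioo a b, DifferentiableAt ℝ f x)
    (x₁ x₂ : ℝ) (hx₁ : x₁ ∈ Set.Icc a b) (hx₂ : x₂ ∈ Set.Icc a b) (hne : x₁ ≠ x₂) :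
    ∃ ξ ∈ Set.Ioo (min x₁ x₂) (max x₁ x₂),
      (x₁ * f x₂ - x₂ * f x₁) / (x₁ - x₂) = f ξ - ξ * deriv f ξ :=
  pompeiu_mvt_general f a b ha hfc hfd x₁ x₂ hx₁ hx₂ hne
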